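/- arXiv:1802.10139 — 5 statements merged into one kernel-verified Lean document; each statement's English description precedes it below -/
import Mathlib

section
/- Let R be the ring of bounded-degree formal power series over a field L in variables x_1, x_2, .... For any f ∈ R and any n, the image of the grevlex leading monomial of f under the truncation map R → L[x_1,...,x_n] (killing all terms involving x_m for m > n) is either zero or equal to the grevlex leading monomial of the truncation f^{(n)}. -/
/-- Total degree of an exponent vector. -/
def expDeg {σ : Type*} (a : σ →₀ ℕ) : ℕ := a.sum fun _ e => e

/-- The graded reverse lexicographic strict order: `GrevlexLt a b` means `x^a < x^b`,
i.e. either `|a| < |b|`, or the degrees agree and the last nonzero entry of `b - a`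
is negative (the last entry where they differ satisfies `b i < a i`). -/
def GrevlexLt {σ : Type*} [LinearOrder σ] (a b : σ →₀ ℕ) : Prop :=
  expDeg a < expDeg b ∨
    (expDeg a = expDeg b ∧ ∃ i, b i < a i ∧ ∀ j, i < j → a j = b j)

open scoped Classical

/-- A grevlex series (bounded-degree formal power series in `x_1, x_2, …`) is modelled
by its coefficient function `(ℕ →₀ ℕ) → L` together with a degree bound. -/
def BddDeg {L : Type*} [Field L] (f : (ℕ →₀ ℕ) → L) : Prop :=
  ∃ d, ∀ α, f α ≠ 0 → expDeg α ≤ d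

/-- Truncation to the first `n` variables (indices `0, …, n-1`): kill every term
involving a variable `x_m` with `m ≥ n`. -/
noncomputable def trunc {L : Type*} [Field L] (n : ℕ) (f : (ℕ →₀ ℕ) → L) :
    (ℕ →₀ ℕ) → L :=
  fun α => if ∀ m, n ≤ m → α m = 0 then f α else 0

/-- `m` is the grevlex leading monomial of the series `f`. -/
def IsLmFn {L : Type*} [Field L] (f : (ℕ →₀ ℕ) → L) (m : ℕ →₀ ℕ) : Prop :=
  f m ≠ 0 ∧ ∀ β, f β ≠ 0 → β = m ∨ GrevlexLt β m

/-- for a bounded-degree grevlex series `f` with leading monomial `μ`,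
the image of `μ` under truncation to `x_1, …, x_n` is either zero (i.e. `μ` involves a
variable `x_m` with `m > n`) or it is the grevlex leading monomial of `f⁽ⁿ⁾`. -/
theorem trunc_lm {L : Type*} [Field L] (f : (ℕ →₀ ℕ) → L) (hf : BddDeg f) (n : ℕ)
    (μ : ℕ →₀ ℕ) (hμ : IsLmFn f μ) :
    (∃ m, n ≤ m ∧ μ m ≠ 0) ∨ IsLmFn (trunc n f) μ := by
  by_cases h : ∃ m, n ≤ m ∧ μ m ≠ 0
  · exact Or.inl h
  · push_neg at h
    right
    constructor
    · simp only [trunc, if_pos h]; exact hμ.1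
    · intro β hβ
      have hfβ : f β ≠ 0 := by
        by_contra hc
        simp [trunc, hc] at hβ
      exact hμ.2 β hfβ
end

section
/- Let I be an ideal in K[x_1,...,x_{n+1}] generated by homogeneous polynomials f_1,...,f_k, and suppose that every syzygy (a_1,...,a_k) of the truncations f_1^{(n)},...,f_k^{(n)} in K[x_1,...,x_n] lifts to a syzygy of f_1,...,f_k. Then every minimal generator of the grevlex initial ideal of I that is divisible by x_{n+1} is such that its quotient by x_{n+1} also lies in the initial ideal; in particular the initial ideal of I is generated by the initial ideal of I ∩ K[x_1,...,x_n]. -/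
/-- `IsLm f m` : `m` is the grevlex leading monomial of `f` (the grevlex-largest
exponent vector with nonzero coefficient in `f`). -/
def IsLm {n : ℕ} {K : Type*} [CommSemiring K] (f : MvPolynomial (Fin n) K)
    (m : Fin n →₀ ℕ) : Prop :=
  m ∈ f.support ∧ ∀ m' ∈ f.support, m' = m ∨ GrevlexLt m' m

/-- Truncation `K[x_1,…,x_{n+1}] → K[x_1,…,x_n]`, setting the last variable to `0`. -/
noncomputable def truncMap (n : ℕ) (K : Type*) [CommSemiring K] :
    MvPolynomial (Fin (n + 1)) K →ₐ[K] MvPolynomial (Fin n) K :=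
  MvPolynomial.aeval (fun i => Fin.lastCases 0 (fun j => MvPolynomial.X j) i)

/-- The set of grevlex leading monomials of nonzero elements of an ideal; it generates
the initial ideal `lm(I)`. -/
def LmSet {n : ℕ} {K : Type*} [CommSemiring K] (I : Ideal (MvPolynomial (Fin n) K)) :
    Set (Fin n →₀ ℕ) :=
  {m | ∃ h ∈ I, IsLm h m}

open MvPolynomial

namespace Aux

variable {N : ℕ} {K : Type*} [Field K]

lemma expDeg_eq_degree {σ : Type*} (a : σ →₀ ℕ) : expDeg a = a.degree := rfl

lemma expDeg_add {σ : Type*} (a b : σ →₀ ℕ) : expDeg (a + b) = expDeg a + expDeg b := by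
  simp only [expDeg_eq_degree, Finsupp.degree_eq_weight_one, map_add]

lemma grevlexLt_add_left {σ : Type*} [LinearOrder σ] (c a b : σ →₀ ℕ)
    (h : GrevlexLt (c + a) (c + b)) : GrevlexLt a b := by
  rcases h with h | ⟨h1, i, h2, h3⟩
  · left; rw [expDeg_add, expDeg_add] at h; omega
  · right
    rw [expDeg_add, expDeg_add] at h1
    refine ⟨by omega, i, ?_, fun j hj => ?_⟩
    · simp only [Finsupp.add_apply] at h2; omega
    · have := h3 j hj; simp only [Finsupp.add_apply] at this; omega

lemma X_dvd_of_support (i : Fin N) (q : MvPolynomial (Fin N) K)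
    (h : ∀ m ∈ q.support, m i ≠ 0) : X i ∣ q := by
  rw [MvPolynomial.X_dvd_iff_modMonomial_eq_zero]
  ext s'
  by_cases hs : Finsupp.single i 1 ≤ s'
  · rw [MvPolynomial.coeff_modMonomial_of_le _ hs, coeff_zero]
  · rw [MvPolynomial.coeff_modMonomial_of_not_le _ hs, coeff_zero]
    rw [Finsupp.single_le_iff] at hs
    by_contra hc
    exact hs (by have := h s' (mem_support_iff.2 hc); omega)

lemma trunc_X_last : truncMap N K (X (Fin.last N)) = 0 := by
  simp [truncMap]

lemma eq_zero_of_trunc {q : MvPolynomial (Fin (N+1)) K}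
    (hsupp : ∀ m ∈ q.support, m (Fin.last N) = 0)
    (h0 : truncMap N K q = 0) : q = 0 := by
  set s : Set (Fin (N+1)) := Set.range Fin.castSucc with hsdef
  have hvars : ↑q.vars ⊆ s := by
    intro i hi
    rw [Finset.mem_coe, MvPolynomial.mem_vars] at hi
    obtain ⟨m, hm, him⟩ := hi
    have hne : i ≠ Fin.last N := by
      rintro rfl
      exact (Finsupp.mem_support_iff.mp him) (hsupp m hm)
    exact ⟨i.castPred hne, Fin.castSucc_castPred i hne⟩
  rw [← MvPolynomial.mem_supported, MvPolynomial.supported_eq_range_rename] at hvars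
  obtain ⟨r, hr⟩ := hvars
  have hne : ∀ j : s, (j : Fin (N+1)) ≠ Fin.last N := by
    rintro ⟨j, x, rfl⟩
    exact (Fin.castSucc_lt_last x).ne
  set u : s → Fin N := fun j => (j : Fin (N+1)).castPred (hne j) with hu
  have hcomp : (truncMap N K).comp (rename ((↑) : s → Fin (N+1))) = rename u := by
    apply MvPolynomial.algHom_ext
    intro j
    simp only [AlgHom.comp_apply, rename_X]
    have hj : (j : Fin (N+1)) = Fin.castSucc (u j) := (Fin.castSucc_castPred _ _).symm
    rw [hj]
    simp [truncMap]
  have hr' : (rename ((↑) : s → Fin (N+1))) r = q := hr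
  have hr0 : rename u r = 0 := by
    rw [← hcomp]
    simp only [AlgHom.comp_apply]
    rw [hr', h0]
  have hinj : Function.Injective u := by
    intro a b hab
    apply Subtype.ext
    have := congrArg Fin.castSucc hab
    rwa [Fin.castSucc_castPred, Fin.castSucc_castPred] at this
  have : r = 0 := by
    apply MvPolynomial.rename_injective u hinj
    simpa using hr0
  rw [← hr', this, map_zero]

lemma X_dvd_of_trunc_eq_zero {q : MvPolynomial (Fin (N+1)) K} (h : truncMap N K q = 0) :
    X (Fin.last N) ∣ q := by
  rw [MvPolynomial.X_dvd_iff_modMonomial_eq_zero]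
  apply eq_zero_of_trunc
  · intro m hm
    rw [mem_support_iff] at hm
    by_contra hc
    exact hm (MvPolynomial.coeff_modMonomial_of_le _ (by rw [Finsupp.single_le_iff]; omega))
  · have hq := MvPolynomial.modMonomial_add_divMonomial q (Finsupp.single (Fin.last N) 1)
    have h1 : truncMap N K (q.modMonomial (Finsupp.single (Fin.last N) 1))
        + truncMap N K (monomial (Finsupp.single (Fin.last N) 1) (1:K)
            * q.divMonomial (Finsupp.single (Fin.last N) 1)) = 0 := by
      rw [← map_add, hq, h]
    have h2 : truncMap N K (monomial (Finsupp.single (Fin.last N) 1) (1:K)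
        * q.divMonomial (Finsupp.single (Fin.last N) 1)) = 0 := by
      rw [map_mul]
      have hx : (monomial (Finsupp.single (Fin.last N) 1) (1:K)) = X (Fin.last N) := rfl
      rw [hx, trunc_X_last, zero_mul]
    rw [h2, add_zero] at h1
    exact h1

lemma homogeneousComponent_mul_right (c p : MvPolynomial (Fin (N+1)) K) {d : ℕ}
    (hp : p.IsHomogeneous d) (D : ℕ) :
    ∃ c', homogeneousComponent D (c * p) = c' * p := by
  classical
  refine ⟨∑ j ∈ Finset.range (c.totalDegree + 1),
    if D = j + d then homogeneousComponent j c else 0, ?_⟩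
  conv_lhs => rw [← MvPolynomial.sum_homogeneousComponent c]
  rw [Finset.sum_mul, map_sum, Finset.sum_mul]
  apply Finset.sum_congr rfl
  intro j _
  have hj : (homogeneousComponent j c * p) ∈ homogeneousSubmodule _ K (j + d) := by
    rw [mem_homogeneousSubmodule]
    exact (homogeneousComponent_isHomogeneous j c).mul hp
  rw [homogeneousComponent_of_mem hj, ite_mul, zero_mul]

end Aux

open Aux


/-- let `I ⊆ K[x_1,…,x_{n+1}]` be generated by homogeneous `f_1,…,f_k`,
and suppose every syzygy of the truncations `f_1⁽ⁿ⁾,…,f_k⁽ⁿ⁾` in `K[x_1,…,x_n]` lifts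
to a syzygy of `f_1,…,f_k`. Then every monomial of the grevlex initial ideal `lm(I)`
that is divisible by `x_{n+1}` has its quotient by `x_{n+1}` in `lm(I)` as well; in
particular `lm(I)` is generated by leading monomials free of `x_{n+1}` (the initial
ideal of `I ∩ K[x_1,…,x_n]`). -/
theorem initial_ideal_no_new_generators {n k : ℕ} {K : Type*} [Field K]
    (f : Fin k → MvPolynomial (Fin (n + 1)) K) (d : Fin k → ℕ)
    (hhom : ∀ i, (f i).IsHomogeneous (d i))
    (I : Ideal (MvPolynomial (Fin (n + 1)) K)) (hI : I = Ideal.span (Set.range f))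
    (hlift : ∀ a : Fin k → MvPolynomial (Fin n) K,
      (∑ i, a i * truncMap n K (f i)) = 0 →
      ∃ c : Fin k → MvPolynomial (Fin (n + 1)) K,
        (∑ i, c i * f i) = 0 ∧ ∀ i, truncMap n K (c i) = a i) :
    (∀ u : Fin (n + 1) →₀ ℕ, u (Fin.last n) ≠ 0 →
      (∃ m ∈ LmSet I, m ≤ u) →
      ∃ m ∈ LmSet I, m ≤ u - Finsupp.single (Fin.last n) 1) ∧
    (∀ u : Fin (n + 1) →₀ ℕ, (∃ m ∈ LmSet I, m ≤ u) →
      ∃ m ∈ LmSet I, m (Fin.last n) = 0 ∧ m ≤ u) := by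
  classical
  have part1 : ∀ u : Fin (n + 1) →₀ ℕ, u (Fin.last n) ≠ 0 →
      (∃ m ∈ LmSet I, m ≤ u) →
      ∃ m ∈ LmSet I, m ≤ u - Finsupp.single (Fin.last n) 1 := by
    intro u hu hex
    obtain ⟨m, hmL, hmu⟩ := hex
    by_cases hml : m (Fin.last n) = 0
    · refine ⟨m, hmL, ?_⟩
      rw [Finsupp.le_def]
      intro j
      rw [Finsupp.tsub_apply]
      have hj := Finsupp.le_def.mp hmu j
      rcases eq_or_ne j (Fin.last n) with rfl | hne
      · rw [hml]; omega
      · rw [Finsupp.single_apply, if_neg (Ne.symm hne)]; omega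
    · obtain ⟨h, hhI, hlm⟩ := hmL
      set e : Fin (n+1) →₀ ℕ := Finsupp.single (Fin.last n) 1 with he
      set D := expDeg m with hD
      rw [hI, Ideal.mem_span_range_iff_exists_fun] at hhI
      obtain ⟨c, hc⟩ := hhI
      choose c' hc' using fun i => homogeneousComponent_mul_right (c i) (f i) (hhom i) D
      set h' := homogeneousComponent D h with hh'
      have hh'sum : h' = ∑ i, c' i * f i := by
        rw [hh', ← hc, map_sum]
        exact Finset.sum_congr rfl fun i _ => hc' i
      have hmh' : m ∈ h'.support := by
        rw [mem_support_iff, coeff_homogeneousComponent,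
          if_pos (expDeg_eq_degree m).symm]
        exact mem_support_iff.mp hlm.1
      have hsub : h'.support ⊆ h.support := by
        intro m' hm'
        rw [mem_support_iff, coeff_homogeneousComponent] at hm'
        rw [mem_support_iff]
        intro hz
        apply hm'
        split <;> simp [hz]
      have hlm' : IsLm h' m := ⟨hmh', fun m' hm' => hlm.2 m' (hsub hm')⟩
      have hdeg : ∀ m' ∈ h'.support, expDeg m' = D := by
        intro m' hm'
        rw [mem_support_iff, coeff_homogeneousComponent] at hm'
        rw [expDeg_eq_degree]
        by_contra hne
        rw [if_neg hne] at hm'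
        exact hm' rfl
      have hsupp : ∀ m' ∈ h'.support, m' (Fin.last n) ≠ 0 := by
        intro m' hm'
        rcases hlm'.2 m' hm' with rfl | hlt
        · exact hml
        · rcases hlt with hlt | ⟨_, i, hi1, hi2⟩
          · exfalso
            rw [hdeg m' hm'] at hlt
            exact absurd hlt (lt_irrefl D)
          · rcases lt_trichotomy i (Fin.last n) with hil | hieq | hgt
            · rw [hi2 (Fin.last n) hil]; exact hml
            · subst hieq; omega
            · exact absurd hgt (not_lt.mpr (Fin.le_last i))
      have hdvd : X (Fin.last n) ∣ h' := X_dvd_of_support _ _ hsupp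
      have htr0 : truncMap n K h' = 0 := by
        obtain ⟨w, hw⟩ := hdvd
        rw [hw, map_mul, trunc_X_last, zero_mul]
      have hsyz : (∑ i, truncMap n K (c' i) * truncMap n K (f i)) = 0 := by
        have : (∑ i, truncMap n K (c' i) * truncMap n K (f i))
            = truncMap n K (∑ i, c' i * f i) := by
          rw [map_sum]
          exact Finset.sum_congr rfl fun i _ => (map_mul _ _ _).symm
        rw [this, ← hh'sum, htr0]
      obtain ⟨b, hb0, hbt⟩ := hlift _ hsyz
      have hdvd2 : ∀ i, X (Fin.last n) ∣ (c' i - b i) := by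
        intro i
        apply X_dvd_of_trunc_eq_zero
        rw [map_sub, hbt, sub_self]
      choose w hw using hdvd2
      have hh'w : h' = X (Fin.last n) * ∑ i, w i * f i := by
        have h3 : h' = ∑ i, (c' i - b i) * f i := by
          rw [hh'sum, ← sub_zero (∑ i, c' i * f i), ← hb0, ← Finset.sum_sub_distrib]
          exact Finset.sum_congr rfl fun i _ => (sub_mul _ _ _).symm
        rw [h3, Finset.mul_sum]
        exact Finset.sum_congr rfl fun i _ => by rw [hw i, mul_assoc]
      set g := ∑ i, w i * f i with hg
      have hgI : g ∈ I := by
        rw [hI]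
        exact Ideal.sum_mem _ fun i _ =>
          Ideal.mul_mem_left _ _ (Ideal.subset_span ⟨i, rfl⟩)
      have hme : e + (m - e) = m := by
        ext j
        rw [Finsupp.add_apply, Finsupp.tsub_apply]
        rcases eq_or_ne j (Fin.last n) with rfl | hne
        · rw [he, Finsupp.single_eq_same]; omega
        · rw [he, Finsupp.single_apply, if_neg (Ne.symm hne)]; omega
      have hsuppg : ∀ m'' : Fin (n+1) →₀ ℕ, m'' ∈ g.support ↔ e + m'' ∈ h'.support := by
        intro m''
        rw [mem_support_iff, mem_support_iff, hh'w, he, coeff_X_mul]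
      have hmeg : (m - e) ∈ g.support := by
        rw [hsuppg, hme]; exact hmh'
      have hglm : IsLm g (m - e) := by
        refine ⟨hmeg, fun m'' hm'' => ?_⟩
        rcases hlm'.2 (e + m'') ((hsuppg m'').mp hm'') with heq | hlt
        · left
          rw [← hme] at heq
          exact add_left_cancel heq
        · right
          rw [← hme] at hlt
          exact grevlexLt_add_left e _ _ hlt
      exact ⟨m - e, ⟨g, hgI, hglm⟩, tsub_le_tsub_right hmu e⟩
  refine ⟨part1, ?_⟩
  have H : ∀ s : ℕ, ∀ u : Fin (n+1) →₀ ℕ, u (Fin.last n) = s →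
      (∃ m ∈ LmSet I, m ≤ u) → ∃ m ∈ LmSet I, m (Fin.last n) = 0 ∧ m ≤ u := by
    intro s
    induction s with
    | zero =>
      rintro u hu0 ⟨m, hm, hmu⟩
      exact ⟨m, hm, by have := Finsupp.le_def.mp hmu (Fin.last n); omega, hmu⟩
    | succ s ih =>
      intro u hu0 hex
      obtain ⟨m', hm', hmu'⟩ := part1 u (by omega) hex
      have h2 : ((u - Finsupp.single (Fin.last n) 1 : Fin (n+1) →₀ ℕ)) (Fin.last n) = s := by
        rw [Finsupp.tsub_apply, Finsupp.single_eq_same]; omega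
      obtain ⟨m'', hm'', h0, hle⟩ := ih _ h2 ⟨m', hm', hmu'⟩
      exact ⟨m'', hm'', h0, hle.trans tsub_le_self⟩
  rintro u ⟨m, hm, hmu⟩
  exact H _ u rfl ⟨m, hm, hmu⟩
end

section
/- If g_1,...,g_l are homogeneous elements of K[x_1,...,x_n] forming a regular sequence, then they are algebraically independent over K. -/
/-!
Write a relation `P(g₀, g₁, …, g_{l-1}) = 0` as a polynomial in the first variable whose
coefficients are polynomials in the others. Modulo `g₀` only the constant coefficient survives,
and it vanishes by induction because `g₁, …, g_{l-1}` is regular on the quotient by `g₀`; since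
`g₀` is a nonzerodivisor it can then be cancelled, and repeating this kills every coefficient.
The induction passes to quotient modules, so it is run for a sequence regular on an arbitrary
module `M`, with `P(g) = 0` weakened to `P(g)` annihilating `M`.
-/

namespace Polynomial

variable {B R M : Type*} [CommRing B] [CommRing R] [AddCommGroup M] [Module R M]
  {φ : B →+* R} {r : R}

theorem coeff_zero_eq_zero_and_eval₂_divX_mem_annihilator (hr : IsSMulRegular M r)
    (hφ : ∀ b, φ b ∈ Module.annihilator R (QuotSMulTop r M) → b = 0)
    {p : B[X]} (hp : p.eval₂ φ r ∈ Module.annihilator R M) :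
    p.coeff 0 = 0 ∧ p.divX.eval₂ φ r ∈ Module.annihilator R M := by
  have hsplit : p.eval₂ φ r = r * p.divX.eval₂ φ r + φ (p.coeff 0) := by
    conv_lhs => rw [← X_mul_divX_add p]
    simp only [eval₂_add, eval₂_mul, eval₂_X, eval₂_C]
  have hpm (m : M) : r • (p.divX.eval₂ φ r • m) + φ (p.coeff 0) • m = 0 := by
    rw [smul_smul, ← add_smul, ← hsplit]
    exact Module.mem_annihilator.mp hp m
  have hcoeff : p.coeff 0 = 0 := by
    refine hφ _ (Module.mem_annihilator.mpr fun m => ?_)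
    induction m using Submodule.Quotient.induction_on with
    | H m =>
      rw [← Submodule.Quotient.mk_smul, Submodule.Quotient.mk_eq_zero,
        Submodule.mem_smul_pointwise_iff_exists]
      exact ⟨-(p.divX.eval₂ φ r • m), trivial, by rw [smul_neg, neg_eq_iff_add_eq_zero, hpm]⟩
  refine ⟨hcoeff, Module.mem_annihilator.mpr fun m => hr.right_eq_zero_of_smul ?_⟩
  simpa [hcoeff] using hpm m

theorem eq_zero_of_eval₂_mem_annihilator (hr : IsSMulRegular M r)
    (hφ : ∀ b, φ b ∈ Module.annihilator R (QuotSMulTop r M) → b = 0)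
    {p : B[X]} (hp : p.eval₂ φ r ∈ Module.annihilator R M) : p = 0 := by
  ext k
  induction k generalizing p with
  | zero => exact (coeff_zero_eq_zero_and_eval₂_divX_mem_annihilator hr hφ hp).1
  | succ k ih =>
    rw [coeff_zero, ← coeff_divX]
    simpa using ih (coeff_zero_eq_zero_and_eval₂_divX_mem_annihilator hr hφ hp).2

end Polynomial

namespace MvPolynomial

theorem aeval_fin_cons {K R : Type*} [CommSemiring K] [CommSemiring R] [Algebra K R] {l : ℕ}
    (r : R) (h : Fin l → R) (P : MvPolynomial (Fin (l + 1)) K) :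
    aeval (Fin.cons r h) P = (finSuccEquiv K l P).eval₂ (aeval h).toRingHom r := by
  induction P using MvPolynomial.induction_on with
  | C a => simp [finSuccEquiv_apply]
  | add p q hp hq => simp [hp, hq]
  | mul_X p i hp =>
    cases i using Fin.cases <;> simp [hp, finSuccEquiv_X_zero, finSuccEquiv_X_succ]

end MvPolynomial

section

open MvPolynomial RingTheory.Sequence

variable {K R M : Type*} [Field K] [CommRing R] [Algebra K R] [AddCommGroup M] [Module R M]

theorem eq_zero_of_algebraMap_mem_annihilator [Nontrivial M] {c : K}
    (hc : algebraMap K R c ∈ Module.annihilator R M) : c = 0 := by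
  by_contra hc0
  have := Ideal.eq_top_of_isUnit_mem _ hc ((IsUnit.mk0 c hc0).map (algebraMap K R))
  exact not_subsingleton M (Module.annihilator_eq_top_iff.mp this)

theorem RingTheory.Sequence.IsRegular.eq_zero_of_aeval_mem_annihilator {l : ℕ} {g : Fin l → R}
    (hreg : IsRegular M (List.ofFn g)) {P : MvPolynomial (Fin l) K}
    (hP : aeval g P ∈ Module.annihilator R M) : P = 0 := by
  induction l generalizing R M with
  | zero =>
    have := hreg.nontrivial
    rw [eq_C_of_isEmpty P, aeval_C] at hP
    rw [eq_C_of_isEmpty P, eq_zero_of_algebraMap_mem_annihilator hP, C_0]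
  | succ l ih =>
    rw [List.ofFn_succ, isRegular_cons_iff', List.map_ofFn] at hreg
    obtain ⟨hr, hquot⟩ := hreg
    have htail (Q : MvPolynomial (Fin l) K)
        (hQ : aeval (fun i => g i.succ) Q ∈ Module.annihilator R (QuotSMulTop (g 0) M)) :
        Q = 0 := by
      refine ih hquot ?_
      rwa [← Module.comap_annihilator (R₀ := R) (R := R ⧸ Ideal.span {g 0}), Ideal.mem_comap,
        Ideal.Quotient.algebraMap_eq, ← Ideal.Quotient.mkₐ_eq_mk K, comp_aeval_apply] at hQ
    rw [← Fin.cons_self_tail g, aeval_fin_cons] at hP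
    exact EmbeddingLike.map_eq_zero_iff.mp
      (Polynomial.eq_zero_of_eval₂_mem_annihilator hr htail hP)

end

theorem regular_sequence_algebraicIndependent_general {n l : ℕ} {K : Type*} [Field K]
    (g : Fin l → MvPolynomial (Fin n) K)
    (hreg : RingTheory.Sequence.IsRegular (MvPolynomial (Fin n) K) (List.ofFn g)) :
    AlgebraicIndependent K g :=
  algebraicIndependent_iff.mpr fun _ hP =>
    hreg.eq_zero_of_aeval_mem_annihilator (hP ▸ Submodule.zero_mem _)

/-- homogeneous elements of `K[x_1,…,x_n]` forming a regular sequence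
are algebraically independent over `K`. -/
theorem regular_sequence_algebraicIndependent {n l : ℕ} {K : Type*} [Field K]
    (g : Fin l → MvPolynomial (Fin n) K) (d : Fin l → ℕ)
    (hhom : ∀ i, (g i).IsHomogeneous (d i))
    (hreg : RingTheory.Sequence.IsRegular (MvPolynomial (Fin n) K) (List.ofFn g)) :
    AlgebraicIndependent K g :=
  regular_sequence_algebraicIndependent_general g hreg
end

section
/- For every d and n, the group of permutations of {n+1, n+2, ...} acting on monomials of degree at most d in variables x_1, x_2, ... (via π·x_i = x_{π(i)}, fixing x_1,...,x_n) has only finitely many orbits, and the grevlex-largest element of each orbit is a monomial x^α with α(n+1) ≥ α(n+2) ≥ .... -/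
/-- `OrbRel n α β` : the exponent vectors `α, β` lie in the same orbit of the group
`S_{>n}` of finitely supported permutations of the variable indices that fix the
first `n` variables (indices `0, …, n-1`), acting by `π · x^α = x^{α ∘ π⁻¹}`. -/
def OrbRel (n : ℕ) (α β : ℕ →₀ ℕ) : Prop :=
  ∃ π : Equiv.Perm ℕ, (∀ i, i < n → π i = i) ∧ {i | π i ≠ i}.Finite ∧
    Finsupp.equivMapDomain π α = β

lemma expDeg_equivMapDomain (π : Equiv.Perm ℕ) (α : ℕ →₀ ℕ) :
    expDeg (Finsupp.equivMapDomain π α) = expDeg α := by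
  unfold expDeg
  exact Finsupp.sum_equivMapDomain π α _

lemma orbRel_symm {n : ℕ} {α β : ℕ →₀ ℕ} (h : OrbRel n α β) : OrbRel n β α := by
  obtain ⟨π, hfix, hfin, hmap⟩ := h
  refine ⟨π.symm, fun i hi => ?_, ?_, ?_⟩
  · conv_lhs => rw [← hfix i hi]
    exact π.symm_apply_apply i
  · refine hfin.subset fun i hi => ?_
    simp only [Set.mem_setOf_eq] at hi ⊢
    intro h'
    exact hi (by conv_lhs => rw [← h']; rw [π.symm_apply_apply])
  · rw [← hmap, ← Finsupp.equivMapDomain_trans]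
    simp [Finsupp.equivMapDomain_refl]

lemma orbRel_trans {n : ℕ} {α β γ : ℕ →₀ ℕ} (h1 : OrbRel n α β) (h2 : OrbRel n β γ) :
    OrbRel n α γ := by
  obtain ⟨π, hfix, hfin, hmap⟩ := h1
  obtain ⟨π', hfix', hfin', hmap'⟩ := h2
  refine ⟨π.trans π', fun i hi => ?_, ?_, ?_⟩
  · simp [Equiv.trans_apply, hfix i hi, hfix' i hi]
  · refine (hfin.union hfin').subset fun i hi => ?_
    simp only [Set.mem_setOf_eq, Set.mem_union, Equiv.trans_apply] at hi ⊢
    by_contra hc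
    push_neg at hc
    rw [hc.1, hc.2] at hi
    exact hi rfl
  · rw [Finsupp.equivMapDomain_trans, hmap, hmap']

lemma sum_le_expDeg (β : ℕ →₀ ℕ) (s : Finset ℕ) : ∑ i ∈ s, β i ≤ expDeg β := by
  calc ∑ i ∈ s, β i = ∑ i ∈ s.filter (fun i => β i ≠ 0), β i :=
        (Finset.sum_filter_ne_zero s).symm
    _ ≤ ∑ i ∈ β.support, β i := by
        refine Finset.sum_le_sum_of_subset fun i hi => ?_
        simp only [Finset.mem_filter] at hi
        exact Finsupp.mem_support_iff.mpr hi.2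
    _ = expDeg β := rfl

lemma sorted_le {n : ℕ} {β : ℕ →₀ ℕ} (hs : ∀ j, n ≤ j → β (j + 1) ≤ β j) :
    ∀ j k, n ≤ j → j ≤ k → β k ≤ β j := by
  intro j k hj hjk
  induction k, hjk using Nat.le_induction with
  | base => exact le_refl _
  | succ k hk ih => exact le_trans (hs k (le_trans hj hk)) ih

lemma grevlex_max {n : ℕ} {β γ : ℕ →₀ ℕ} (h : OrbRel n β γ)
    (hs : ∀ j, n ≤ j → β (j + 1) ≤ β j) : γ = β ∨ GrevlexLt γ β := by
  obtain ⟨π, hfix, hfin, hmap⟩ := h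
  have hγ : ∀ x, γ x = β (π.symm x) := fun x => by
    rw [← hmap]; rfl
  have hsymm_fix : ∀ i, i < n → π.symm i = i := fun i hi => by
    conv_lhs => rw [← hfix i hi]
    exact π.symm_apply_apply i
  have hdeg : expDeg γ = expDeg β := by rw [← hmap, expDeg_equivMapDomain]
  set D : Finset ℕ := (β.support ∪ γ.support).filter (fun j => γ j ≠ β j) with hD
  by_cases hDe : D = ∅
  · left
    ext j
    by_contra hne
    have hj : j ∈ D := by
      simp only [hD, Finset.mem_filter, Finset.mem_union, Finsupp.mem_support_iff]
      refine ⟨?_, hne⟩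
      by_contra hc
      push_neg at hc
      exact hne (by rw [hc.1, hc.2])
    rw [hDe] at hj
    exact absurd hj (Finset.notMem_empty j)
  · right
    have hDne : D.Nonempty := Finset.nonempty_of_ne_empty hDe
    set i := D.max' hDne with hi
    have hiD : i ∈ D := D.max'_mem hDne
    have hiNe : γ i ≠ β i := (Finset.mem_filter.mp hiD).2
    have hin : n ≤ i := by
      by_contra hc
      push_neg at hc
      exact hiNe (by rw [hγ, hsymm_fix i hc])
    have hagree : ∀ j, i < j → γ j = β j := by
      intro j hij
      by_contra hc
      have hjD : j ∈ D := by
        simp only [hD, Finset.mem_filter, Finset.mem_union, Finsupp.mem_support_iff]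
        refine ⟨?_, hc⟩
        by_contra hc2
        push_neg at hc2
        exact hc (by rw [hc2.1, hc2.2])
      exact absurd (D.le_max' j hjD) (not_le.mpr hij)
    -- main claim: β i < γ i
    have hmain : β i < γ i := by
      by_contra hc
      push_neg at hc
      have hlt : γ i < β i := lt_of_le_of_ne hc hiNe
      set t := β i with ht
      have ht1 : 1 ≤ t := Nat.one_le_iff_ne_zero.mpr (by omega)
      set Aβ : Finset ℕ := β.support.filter (fun j => t ≤ β j) with hAβ
      set Aγ : Finset ℕ := γ.support.filter (fun j => t ≤ γ j) with hAγ
      have hAmap : Aγ = Aβ.map π.toEmbedding := by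
        ext x
        simp only [hAγ, hAβ, Finset.mem_map, Finset.mem_filter, Finsupp.mem_support_iff,
          Equiv.coe_toEmbedding]
        constructor
        · rintro ⟨h1, h2⟩
          rw [hγ x] at h1 h2
          exact ⟨π.symm x, ⟨h1, h2⟩, π.apply_symm_apply x⟩
        · rintro ⟨j, ⟨h1, h2⟩, rfl⟩
          rw [hγ (π j), π.symm_apply_apply]
          exact ⟨h1, h2⟩
      have hcard : Aβ.card = Aγ.card := by rw [hAmap, Finset.card_map]
      set P : ℕ → Prop := fun j => n ≤ j ∧ j ≤ i with hP
      have hout : Aβ.filter (fun j => ¬ P j) = Aγ.filter (fun j => ¬ P j) := by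
        ext j
        have hPj : ¬ P j → γ j = β j := by
          intro hnP
          simp only [hP, not_and, not_le] at hnP
          rcases lt_or_ge j n with hjn | hjn
          · rw [hγ, hsymm_fix j hjn]
          · exact hagree j (hnP hjn)
        simp only [hAβ, hAγ, Finset.mem_filter, Finsupp.mem_support_iff]
        constructor
        · rintro ⟨⟨h1, h2⟩, h3⟩
          rw [← hPj h3] at h1 h2
          exact ⟨⟨h1, h2⟩, h3⟩
        · rintro ⟨⟨h1, h2⟩, h3⟩
          rw [hPj h3] at h1 h2
          exact ⟨⟨h1, h2⟩, h3⟩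
      have hmidcard : (Aβ.filter P).card = (Aγ.filter P).card := by
        have e1 := Finset.card_filter_add_card_filter_not (s := Aβ) (p := P)
        have e2 := Finset.card_filter_add_card_filter_not (s := Aγ) (p := P)
        rw [hout] at e1
        omega
      have hβfull : Aβ.filter P = Finset.Icc n i := by
        ext j
        simp only [hAβ, hP, Finset.mem_filter, Finsupp.mem_support_iff, Finset.mem_Icc]
        constructor
        · rintro ⟨_, h2⟩; exact h2
        · rintro ⟨h1, h2⟩
          have hb : t ≤ β j := sorted_le hs j i h1 h2
          exact ⟨⟨by omega, hb⟩, h1, h2⟩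
      have hγsub : Aγ.filter P ⊆ Finset.Ico n i := by
        intro j hj
        simp only [hAγ, hP, Finset.mem_filter, Finsupp.mem_support_iff] at hj
        obtain ⟨⟨h1, h2⟩, h3, h4⟩ := hj
        rw [Finset.mem_Ico]
        refine ⟨h3, lt_of_le_of_ne h4 ?_⟩
        rintro rfl
        exact absurd h2 (not_le.mpr hlt)
      have c1 : (Aβ.filter P).card = i + 1 - n := by rw [hβfull, Nat.card_Icc]
      have c2 : (Aγ.filter P).card ≤ i - n := by
        calc (Aγ.filter P).card ≤ (Finset.Ico n i).card := Finset.card_le_card hγsub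
          _ = i - n := Nat.card_Ico n i
      omega
    exact Or.inr ⟨hdeg, i, hmain, hagree⟩

lemma exists_sorted_rep (n : ℕ) (α : ℕ →₀ ℕ) :
    ∃ β : ℕ →₀ ℕ, OrbRel n α β ∧ (∀ j, n ≤ j → β (j + 1) ≤ β j) := by
  classical
  set m := (α.support.sup id) + 1 with hm
  have hzero : ∀ j, n + m ≤ j → α j = 0 := by
    intro j hj
    by_contra hc
    have : j ∈ α.support := Finsupp.mem_support_iff.mpr hc
    have := Finset.le_sup (f := id) this
    simp only [id] at this
    omega
  set f : Fin m → ℕᵒᵈ := fun k => OrderDual.toDual (α (n + k)) with hf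
  set σ : Equiv.Perm (Fin m) := Tuple.sort f with hσ
  have hmono : Monotone (f ∘ σ) := Tuple.monotone_sort f
  set p : ℕ → Prop := fun j => n ≤ j ∧ j < n + m with hp
  have hpd : DecidablePred p := fun j => by rw [hp]; infer_instance
  set e : Fin m ≃ {j : ℕ // p j} :=
    { toFun := fun k => ⟨n + k, ⟨Nat.le_add_right _ _, by have := k.isLt; omega⟩⟩
      invFun := fun j => ⟨j.1 - n, by have := j.2; simp only [hp] at this; omega⟩
      left_inv := fun k => by ext; simp
      right_inv := fun j => by
        ext
        have := j.2
        simp only [hp] at this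
        simp [Nat.add_sub_cancel' this.1] } with he
  set π : Equiv.Perm ℕ := Equiv.Perm.extendDomain σ⁻¹ e with hπ
  have hπfix : ∀ j, ¬ p j → π j = j := fun j hj =>
    Equiv.Perm.extendDomain_apply_not_subtype σ⁻¹ e hj
  have hπinv : ∀ k : Fin m, π.symm (n + k) = n + σ k := by
    intro k
    have h1 : π.symm = Equiv.Perm.extendDomain σ e := by
      rw [hπ, ← Equiv.Perm.extendDomain_inv]
      rfl
    have h2 : (Equiv.Perm.extendDomain σ e) ((e k : ℕ)) = ((e (σ k) : ℕ)) :=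
      Equiv.Perm.extendDomain_apply_image σ e k
    rw [h1]
    simpa [he] using h2
  refine ⟨Finsupp.equivMapDomain π α, ⟨π, ?_, ?_, rfl⟩, ?_⟩
  · intro i hi
    exact hπfix i (by simp only [hp]; omega)
  · refine (Set.finite_Ico n (n + m)).subset fun i hi => ?_
    simp only [Set.mem_setOf_eq] at hi
    by_contra hc
    simp only [Set.mem_Ico, not_and, not_lt] at hc
    exact hi (hπfix i (by simp only [hp]; omega))
  · intro j hj
    have happ : ∀ x, Finsupp.equivMapDomain π α x = α (π.symm x) := fun x => rfl
    rcases lt_or_ge (j + 1) (n + m) with hlt | hge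
    · -- j = n + k, k + 1 < m
      obtain ⟨k, rfl⟩ := Nat.exists_eq_add_of_le hj
      have hk1 : k + 1 < m := by omega
      have hk : k < m := by omega
      have e1 : Finsupp.equivMapDomain π α (n + k) = α (n + σ ⟨k, hk⟩) := by
        rw [happ]
        exact congrArg α (hπinv ⟨k, hk⟩)
      have e2 : Finsupp.equivMapDomain π α (n + k + 1) = α (n + σ ⟨k + 1, hk1⟩) := by
        rw [happ]
        have := hπinv ⟨k + 1, hk1⟩
        simp only [Fin.val_mk] at this
        rw [← Nat.add_assoc] at this
        exact congrArg α this
      rw [e1, e2]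
      have := hmono (a := ⟨k, hk⟩) (b := ⟨k + 1, hk1⟩) (by simp [Fin.le_def])
      simpa [hf] using this
    · have e2 : Finsupp.equivMapDomain π α (j + 1) = 0 := by
        rw [happ]
        have hfixj : π.symm (j + 1) = j + 1 := by
          have := hπfix (j + 1) (by simp only [hp]; omega)
          conv_lhs => rw [← this]
          exact π.symm_apply_apply _
        rw [hfixj]
        exact hzero _ hge
      rw [e2]
      exact Nat.zero_le _


/-- for every `d` and `n`, the group `S_{>n}` has only finitely many
orbits on monomials of degree at most `d`, and each orbit has a grevlex-largest
element `x^β`, which satisfies `β(n+1) ≥ β(n+2) ≥ …`. -/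
theorem finitely_many_orbits_and_sorted_max (d n : ℕ) :
    (∃ T : Finset (ℕ →₀ ℕ), ∀ α : ℕ →₀ ℕ, expDeg α ≤ d → ∃ β ∈ T, OrbRel n α β) ∧
    (∀ α : ℕ →₀ ℕ, expDeg α ≤ d → ∃ β, OrbRel n α β ∧
      (∀ γ, OrbRel n α γ → γ = β ∨ GrevlexLt γ β) ∧
      (∀ j, n ≤ j → β (j + 1) ≤ β j)) := by
  classical
  constructor
  · set μ : ℕ →₀ ℕ := Finsupp.onFinset (Finset.range (n + d))
      (fun j => if j < n + d then d else 0)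
      (fun j h => by
        rw [Finset.mem_range]
        by_contra hc
        simp only [if_neg hc] at h
        exact h rfl) with hμ
    refine ⟨Finset.Iic μ, fun α hα => ?_⟩
    obtain ⟨β, horb, hsort⟩ := exists_sorted_rep n α
    refine ⟨β, ?_, horb⟩
    rw [Finset.mem_Iic, Finsupp.le_def]
    intro j
    have hdegβ : expDeg β ≤ d := by
      obtain ⟨π, _, _, hmap⟩ := horb
      rw [← hmap, expDeg_equivMapDomain]
      exact hα
    have hjle : β j ≤ d := by
      have h := sum_le_expDeg β {j}
      rw [Finset.sum_singleton] at h
      omega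
    rcases lt_or_ge j (n + d) with h | h
    · have : μ j = d := by rw [hμ, Finsupp.onFinset_apply, if_pos h]
      rw [this]
      exact hjle
    · have hβj : β j = 0 := by
        by_contra hc
        have h1 : ∀ k ∈ Finset.Icc n j, 1 ≤ β k := fun k hk => by
          rw [Finset.mem_Icc] at hk
          have := sorted_le hsort k j hk.1 hk.2
          omega
        have h2 := Finset.card_nsmul_le_sum (Finset.Icc n j) β 1 h1
        have h3 := sum_le_expDeg β (Finset.Icc n j)
        rw [Nat.card_Icc, smul_eq_mul, mul_one] at h2
        have h4 : (Finset.Icc n j).sum ⇑β = ∑ i ∈ Finset.Icc n j, β i := rfl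
        omega
      rw [hβj]
      exact Nat.zero_le _
  · intro α hα
    obtain ⟨β, horb, hsort⟩ := exists_sorted_rep n α
    exact ⟨β, horb, fun γ hγ => grevlex_max (orbRel_trans (orbRel_symm horb) hγ) hsort, hsort⟩
end

section
/- If f and g are S_{>n}-invariant monic grevlex series whose leading monomials are also S_{>n}-invariant, then the S-polynomial S(f,g) = (x^γ/lm(f))·f − (x^γ/lm(g))·g, where x^γ = lcm(lm(f), lm(g)), is S_{>n}-invariant. -/
open scoped Classical

/-- Multiplication of a grevlex series by the monomial `x^δ`. -/
noncomputable def monMul {L : Type*} [Field L] (δ : ℕ →₀ ℕ) (f : (ℕ →₀ ℕ) → L) :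
    (ℕ →₀ ℕ) → L :=
  fun α => if δ ≤ α then f (α - δ) else 0

/-- A series is `S_{>n}`-invariant if it is fixed by every finitely supported
permutation of the variable indices fixing the first `n` variables. -/
def SInv {L : Type*} [Field L] (n : ℕ) (f : (ℕ →₀ ℕ) → L) : Prop :=
  ∀ π : Equiv.Perm ℕ, (∀ i, i < n → π i = i) → {i | π i ≠ i}.Finite →
    ∀ α, f (Finsupp.equivMapDomain π α) = f α

lemma emd_apply (π : Equiv.Perm ℕ) (a : ℕ →₀ ℕ) (i : ℕ) :
    Finsupp.equivMapDomain π a i = a (π.symm i) := rfl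

lemma emd_le (π : Equiv.Perm ℕ) (a b : ℕ →₀ ℕ) :
    Finsupp.equivMapDomain π a ≤ Finsupp.equivMapDomain π b ↔ a ≤ b := by
  constructor <;> intro h <;> intro i
  · have := h (π i); simpa [emd_apply] using this
  · simpa [emd_apply] using h (π.symm i)

lemma emd_sub (π : Equiv.Perm ℕ) (a b : ℕ →₀ ℕ) :
    Finsupp.equivMapDomain π (a - b)
      = Finsupp.equivMapDomain π a - Finsupp.equivMapDomain π b := by
  ext i; simp [emd_apply, Finsupp.sub_apply]

lemma emd_sup (π : Equiv.Perm ℕ) (a b : ℕ →₀ ℕ) :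
    Finsupp.equivMapDomain π (a ⊔ b)
      = Finsupp.equivMapDomain π a ⊔ Finsupp.equivMapDomain π b := by
  ext i; simp [emd_apply, Finsupp.sup_apply]

lemma monMul_inv {L : Type*} [Field L] (n : ℕ) (f : (ℕ →₀ ℕ) → L) (δ : ℕ →₀ ℕ)
    (hf : SInv n f)
    (hδ : ∀ π : Equiv.Perm ℕ, (∀ i, i < n → π i = i) → {i | π i ≠ i}.Finite →
      Finsupp.equivMapDomain π δ = δ) :
    SInv n (monMul δ f) := by
  intro π hπ hfin α
  have hδπ := hδ π hπ hfin
  unfold monMul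
  have hle : δ ≤ Finsupp.equivMapDomain π α ↔ δ ≤ α := by
    conv_lhs => rw [← hδπ]
    exact emd_le π δ α
  by_cases h : δ ≤ α
  · rw [if_pos (hle.2 h), if_pos h]
    have : Finsupp.equivMapDomain π α - δ = Finsupp.equivMapDomain π (α - δ) := by
      rw [emd_sub, hδπ]
    rw [this, hf π hπ hfin]
  · rw [if_neg (fun h' => h (hle.1 h')), if_neg h]

/-- if `f, g` are `S_{>n}`-invariant monic grevlex series whose leading
monomials `x^{μf}, x^{μg}` are also `S_{>n}`-invariant, then the S-polynomial
`S(f,g) = (x^γ/lm f)·f − (x^γ/lm g)·g`, with `x^γ = lcm(lm f, lm g)`,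
is `S_{>n}`-invariant. -/
theorem sPoly_invariant {L : Type*} [Field L] (n : ℕ) (f g : (ℕ →₀ ℕ) → L)
    (hfb : ∃ d, ∀ α, f α ≠ 0 → expDeg α ≤ d) (hgb : ∃ d, ∀ α, g α ≠ 0 → expDeg α ≤ d)
    (μf μg : ℕ →₀ ℕ) (hlf : IsLmFn f μf) (hlg : IsLmFn g μg)
    (hmf : f μf = 1) (hmg : g μg = 1)
    (hf : SInv n f) (hg : SInv n g)
    (hμf : ∀ π : Equiv.Perm ℕ, (∀ i, i < n → π i = i) → {i | π i ≠ i}.Finite →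
      Finsupp.equivMapDomain π μf = μf)
    (hμg : ∀ π : Equiv.Perm ℕ, (∀ i, i < n → π i = i) → {i | π i ≠ i}.Finite →
      Finsupp.equivMapDomain π μg = μg) :
    SInv n (fun α => monMul (μf ⊔ μg - μf) f α - monMul (μf ⊔ μg - μg) g α) := by
  intro π hπ hfin α
  have hδf : Finsupp.equivMapDomain π (μf ⊔ μg - μf) = μf ⊔ μg - μf := by
    rw [emd_sub, emd_sup, hμf π hπ hfin, hμg π hπ hfin]
  have hδg : Finsupp.equivMapDomain π (μf ⊔ μg - μg) = μf ⊔ μg - μg := by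
    rw [emd_sub, emd_sup, hμf π hπ hfin, hμg π hπ hfin]
  have h1 := monMul_inv n f (μf ⊔ μg - μf) hf (fun π hπ hfin => by
    rw [emd_sub, emd_sup, hμf π hπ hfin, hμg π hπ hfin]) π hπ hfin α
  have h2 := monMul_inv n g (μf ⊔ μg - μg) hg (fun π hπ hfin => by
    rw [emd_sub, emd_sup, hμf π hπ hfin, hμg π hπ hfin]) π hπ hfin α
  simp only [h1, h2]
end
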